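/- Let 0 < α < ε < 1 be constants, let D be a fixed positive integer, let c = ⌈(1+ε)n⌉, let p satisfy log n/n ≤ p ≤ 2 log n/n, and let γ:ℕ→(0,1) be any function with γ(n)→0. Then the probability that G ~ G_c(n,p) admits an integer j with n/log^{0.9} n ≤ j ≤ 2n/log^{0.4} n and subsets X ⊆ [n], W ⊆ [n], W' ⊆ W, 𝒞₁ ⊆ [c], 𝒞₂ ⊆ 𝒞₁ such that |X| = j, (1−γ(n))·n/log log n ≤ |W| ≤ (1+γ(n))·n/log log n, |𝒞₁| = ⌈αn⌉, |W'| ≤ 2Dj, |𝒞₂| ≤ 2Dj, and every edge xw of G with x ∈ X and w ∈ W satisfies c(xw) ∈ 𝒞₂ or w ∈ W' or c(xw) ∉ 𝒞₁, tends to 0 as n→∞. -/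

import Mathlib

open MeasureTheory Filter
open scoped ENNReal

/-- The potential edges of a `k`-uniform hypergraph on vertex set `Fin n`. -/
abbrev HEdge (n k : ℕ) := {e : Finset (Fin n) // e.card = k}

/-- A sample of the colored random hypergraph: each potential edge is either absent
(`none`) or present with a color from `Fin c`. -/
abbrev CSample (n k c : ℕ) := HEdge n k → Option (Fin c)

/-- A sample of the uncolored random hypergraph. -/
abbrev USample (n k : ℕ) := HEdge n k → Bool

/-- Every subset of the (finite) status space of an edge is measurable. -/
instance optionFinMeasurableSpace (c : ℕ) : MeasurableSpace (Option (Fin c)) := ⊤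

/-- The old `PMF.bernoulli` with an `ℝ≥0∞` parameter: probability `p` to `true`
and `1 - p` to `false`. -/
noncomputable def ennBernoulli (p : ℝ≥0∞) (h : p ≤ 1) : PMF Bool :=
  PMF.ofFintype (fun b => cond b p (1 - p)) (by simp [h])

/-- The distribution of the status of a single edge: absent with probability `1 - p`,
present with a uniformly random color with probability `p`. -/
noncomputable def edgePMF (c : ℕ) (p : ℝ≥0∞) : PMF (Option (Fin c)) :=
  if h : c = 0 then PMF.pure none
  else
    haveI : Nonempty (Fin c) := ⟨⟨0, Nat.pos_of_ne_zero h⟩⟩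
    (ennBernoulli (min p 1) (min_le_right _ _)).bind fun b =>
      if b then (PMF.uniformOfFintype (Fin c)).map some else PMF.pure none

/-- The law of the randomly edge-colored random `k`-uniform hypergraph `H^k_c(n,p)`:
the edges are independent and each is present with probability `p`, receiving a
uniformly random color from `[c]`. -/
noncomputable def cHyper (n k c : ℕ) (p : ℝ≥0∞) : Measure (CSample n k c) :=
  Measure.pi fun _ => (edgePMF c p).toMeasure

/-- The law of the uncolored binomial random `k`-uniform hypergraph `H^k(n,p)`. -/
noncomputable def uHyper (n k : ℕ) (p : ℝ≥0∞) : Measure (USample n k) :=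
  Measure.pi fun _ => (ennBernoulli (min p 1) (min_le_right _ _)).toMeasure

/-- The status of the pair `{v, w}` in a colored graph sample (k = 2):
`none` if absent (or if `v = w`), `some x` if present with color `x`. -/
def col {n c : ℕ} (ω : CSample n 2 c) (v w : Fin n) : Option (Fin c) :=
  if h : v = w then none else ω ⟨{v, w}, Finset.card_pair h⟩

/-- Adjacency in an uncolored graph sample (k = 2). -/
def uadj {n : ℕ} (ω : USample n 2) (v w : Fin n) : Prop :=
  if h : v = w then False else ω ⟨{v, w}, Finset.card_pair h⟩ = true

/-!
Union bound over the at most `2 ^ (3n + 2c) ≤ 2 ^ (7n)` choices of `(X, W, W', C1, C2)`. For a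
fixed choice, consider the `|X| · |W \ (W' ∪ X)| ≥ n² / (2 log^0.9 n · log log n)` pairs between
`X` and `W \ (W' ∪ X)`: they are distinct, and each one independently is an edge with a color in
`C1 \ C2` with probability at least `p · |C1 \ C2| / c ≥ (log n / n) (α n / 2) / (2n)`, which the
configuration forbids. Hence a fixed configuration occurs with probability at most
`exp (-α n log^0.1 n / (8 log log n)) ≤ exp (-8n)`, and `2 ^ (7n) e^(-8n) ≤ e^(-n) → 0`.
-/

open Finset Real

lemma card_sub_card_le_card_sdiff {α : Type*} [DecidableEq α] (s t : Finset α) :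
    (#t : ℝ) - #s ≤ #(t \ s) := by
  have : (#t : ℝ) ≤ #(t \ s) + #s := by exact_mod_cast card_le_card_sdiff_add_card
  linarith

lemma card_sub_card_sub_card_le_card_sdiff_union {α : Type*} [DecidableEq α]
    (s t u : Finset α) : (#u : ℝ) - #s - #t ≤ #(u \ (s ∪ t)) := by
  have : (#(s ∪ t) : ℝ) ≤ #s + #t := by exact_mod_cast card_union_le s t
  linarith [card_sub_card_le_card_sdiff (s ∪ t) u]

lemma edgePMF_apply_some {c : ℕ} (hc : c ≠ 0) (p : ℝ≥0∞) (y : Fin c) :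
    edgePMF c p (some y) = min p 1 * (c : ℝ≥0∞)⁻¹ := by
  have : Nonempty (Fin c) := ⟨⟨0, Nat.pos_of_ne_zero hc⟩⟩
  rw [edgePMF, dif_neg hc, PMF.bind_apply, tsum_bool]
  simp [ennBernoulli, PMF.map_apply]

lemma edgePMF_toMeasure_some_image {c : ℕ} (hc : c ≠ 0) (p : ℝ≥0∞) (B : Finset (Fin c)) :
    (edgePMF c p).toMeasure (some '' B) = #B * (min p 1 * (c : ℝ≥0∞)⁻¹) := by
  have : MeasurableSingletonClass (Option (Fin c)) :=
    ⟨fun _ => MeasurableSpace.measurableSet_top⟩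
  rw [← coe_image, PMF.toMeasure_apply_finset, sum_image fun _ _ _ _ => Option.some_inj.mp]
  simp [edgePMF_apply_some hc]

lemma col_of_ne {n c : ℕ} (ω : CSample n 2 c) {v w : Fin n} (h : v ≠ w) :
    col ω v w = ω ⟨{v, w}, card_pair h⟩ :=
  dif_neg h

def edgesBetween {n : ℕ} (X Y : Finset (Fin n)) : Finset (HEdge n 2) :=
  ((X ×ˢ Y).image fun q => ({q.1, q.2} : Finset (Fin n))).subtype (#· = 2)

lemma mem_edgesBetween {n : ℕ} {X Y : Finset (Fin n)} {e : HEdge n 2} :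
    e ∈ edgesBetween X Y ↔ ∃ x ∈ X, ∃ y ∈ Y, {x, y} = e.1 := by
  simp [edgesBetween, and_assoc]

lemma card_edgesBetween {n : ℕ} {X Y : Finset (Fin n)} (hXY : Disjoint X Y) :
    #(edgesBetween X Y) = #X * #Y := by
  have hne : ∀ x ∈ X, ∀ y ∈ Y, x ≠ y := fun x hx y hy => disjoint_iff_ne.mp hXY x hx y hy
  rw [edgesBetween, card_subtype, filter_true_of_mem, card_image_of_injOn, card_product]
  · rintro ⟨x, y⟩ hxy ⟨x', y'⟩ hxy' h
    simp only [coe_product, Set.mem_prod, mem_coe] at hxy hxy' h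
    have hx : x ∈ ({x', y'} : Finset (Fin n)) := h ▸ mem_insert_self x {y}
    have hy : y ∈ ({x', y'} : Finset (Fin n)) := h ▸ by simp
    simp only [mem_insert, mem_singleton] at hx hy
    grind
  · simp only [mem_image, mem_product]
    rintro _ ⟨⟨x, y⟩, ⟨hx, hy⟩, rfl⟩
    exact card_pair (hne x hx y hy)

lemma cHyper_forall_col_ne {n c : ℕ} (hc : c ≠ 0) (q : ℝ≥0∞) {X Y : Finset (Fin n)}
    (hXY : Disjoint X Y) (B : Finset (Fin c)) :
    cHyper n 2 c q {ω | ∀ x ∈ X, ∀ y ∈ Y, ∀ b ∈ B, col ω x y ≠ some b}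
      = (1 - #B * (min q 1 * (c : ℝ≥0∞)⁻¹)) ^ (#X * #Y) := by
  have hne : ∀ x ∈ X, ∀ y ∈ Y, x ≠ y := fun x hx y hy => disjoint_iff_ne.mp hXY x hx y hy
  have hevent : {ω : CSample n 2 c | ∀ x ∈ X, ∀ y ∈ Y, ∀ b ∈ B, col ω x y ≠ some b}
      = (edgesBetween X Y : Set (HEdge n 2)).pi fun _ => (some '' B)ᶜ := by
    ext ω
    simp only [Set.mem_ofPred_eq, Set.mem_pi, mem_coe, mem_edgesBetween, Set.mem_compl_iff,
      Set.mem_image, not_exists, not_and]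
    constructor
    · rintro h ⟨e, he⟩ ⟨x, hx, y, hy, rfl⟩ b hb hωb
      exact h x hx y hy b hb ((col_of_ne ω (hne x hx y hy)).trans hωb.symm)
    · intro h x hx y hy b hb hcol
      exact h _ ⟨x, hx, y, hy, rfl⟩ b hb ((col_of_ne ω (hne x hx y hy)).symm.trans hcol).symm
  rw [hevent, cHyper, Measure.pi_pi_finset, prod_const, card_edgesBetween hXY,
    prob_compl_eq_one_sub MeasurableSpace.measurableSet_top, edgePMF_toMeasure_some_image hc]

lemma ENNReal.one_sub_ofReal_pow_le_exp {r : ℝ} (hr : 0 ≤ r) (m : ℕ) :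
    (1 - ENNReal.ofReal r) ^ m ≤ ENNReal.ofReal (exp (-(r * m))) := by
  calc (1 - ENNReal.ofReal r) ^ m = ENNReal.ofReal (1 - r) ^ m := by
        rw [ENNReal.ofReal_sub 1 hr, ENNReal.ofReal_one]
    _ ≤ ENNReal.ofReal (exp (-r)) ^ m := by gcongr; exact one_sub_le_exp_neg r
    _ = ENNReal.ofReal (exp (-(r * m))) := by
        rw [← ENNReal.ofReal_pow (exp_pos _).le, ← exp_nat_mul]; ring_nf

lemma ENNReal.two_pow_le_ofReal_exp (m : ℕ) : (2 : ℝ≥0∞) ^ m ≤ ENNReal.ofReal (exp m) := by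
  rw [← exp_one_pow, ENNReal.ofReal_pow (exp_pos 1).le, ← ENNReal.ofReal_ofNat]
  gcongr
  linarith [add_one_le_exp 1]

lemma measure_setOf_exists_le {Ω ι : Type*} [MeasurableSpace Ω] [Fintype ι] (μ : Measure Ω)
    {P : ι → Ω → Prop} {b : ℝ≥0∞} (h : ∀ i, μ {ω | P i ω} ≤ b) :
    μ {ω | ∃ i, P i ω} ≤ Fintype.card ι * b := by
  rw [Set.ofPred_exists]
  calc μ (⋃ i, {ω | P i ω}) ≤ ∑ i, μ {ω | P i ω} := measure_iUnion_fintype_le μ _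
    _ ≤ ∑ _i : ι, b := sum_le_sum fun i _ => h i
    _ = Fintype.card ι * b := by simp

lemma cHyper_blocked_le_exp {n c : ℕ} (hc : c ≠ 0) {p : ℝ} (hp : 0 ≤ p)
    (X W W' : Finset (Fin n)) (C1 C2 : Finset (Fin c)) :
    cHyper n 2 c (ENNReal.ofReal p)
        {ω | ∀ x ∈ X, ∀ w ∈ W, ∀ y, col ω x w = some y → y ∈ C2 ∨ w ∈ W' ∨ y ∉ C1}
      ≤ ENNReal.ofReal (exp (-(#(C1 \ C2) * min p 1 / c * (#X * #(W \ (W' ∪ X)) : ℕ)))) := by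
  have hsub : {ω : CSample n 2 c | ∀ x ∈ X, ∀ w ∈ W, ∀ y, col ω x w = some y →
        y ∈ C2 ∨ w ∈ W' ∨ y ∉ C1}
      ⊆ {ω | ∀ x ∈ X, ∀ w ∈ W \ (W' ∪ X), ∀ y ∈ C1 \ C2, col ω x w ≠ some y} := by
    intro ω hω x hx w hw y hy hcol
    simp only [Finset.mem_sdiff, Finset.mem_union, not_or] at hw hy
    rcases hω x hx w hw.1 y hcol with h | h | h
    exacts [hy.2 h, hw.2.1 h, h hy.1]
  have hρ : ENNReal.ofReal (#(C1 \ C2) * min p 1 / c)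
      = #(C1 \ C2) * (min (ENNReal.ofReal p) 1 * (c : ℝ≥0∞)⁻¹) := by
    rw [mul_div_assoc, ENNReal.ofReal_mul (by positivity),
      ENNReal.ofReal_div_of_pos (by positivity), ENNReal.ofReal_min]
    simp only [ENNReal.ofReal_natCast, ENNReal.ofReal_one, div_eq_mul_inv]
  calc _ ≤ _ := measure_mono hsub
    _ = _ := cHyper_forall_col_ne hc _ (disjoint_sdiff.mono_left subset_union_right) _
    _ ≤ _ := hρ ▸ ENNReal.one_sub_ofReal_pow_le_exp (by positivity) _

lemma cHyper_blocked_le {n c D : ℕ} {α p γ : ℝ} (hα : 0 < α) (hc : c ≠ 0) (hcn : c ≤ 2 * n)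
    (hp : log n / n ≤ p) (hγ : γ ≤ 1 / 4) (hLL : 0 < log (log n))
    (hcolors : 8 * D ≤ α * log n ^ (0.4 : ℝ))
    (hvertices : 8 * (2 * D + 1) * log (log n) ≤ log n ^ (0.4 : ℝ))
    (hedges : 64 * log (log n) ≤ α * log n ^ (0.1 : ℝ))
    {X W W' : Finset (Fin n)} {C1 C2 : Finset (Fin c)}
    (hX : n / log n ^ (0.9 : ℝ) ≤ #X) (hX' : #X ≤ 2 * n / log n ^ (0.4 : ℝ))
    (hW : (1 - γ) * n / log (log n) ≤ #W) (hW' : #W' ≤ 2 * D * (#X : ℝ))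
    (hC1 : α * n ≤ #C1) (hC2 : #C2 ≤ 2 * D * (#X : ℝ)) :
    cHyper n 2 c (ENNReal.ofReal p)
        {ω | ∀ x ∈ X, ∀ w ∈ W, ∀ y, col ω x w = some y → y ∈ C2 ∨ w ∈ W' ∨ y ∉ C1}
      ≤ ENNReal.ofReal (exp (-(8 * n))) := by
  set L := log n
  set l := log L
  set s := L ^ (0.4 : ℝ)
  set t := L ^ (0.9 : ℝ)
  have hn : (0 : ℝ) < n := Nat.cast_pos.mpr (by omega)
  have hL : 1 < L := by
    rwa [log_pos_iff (log_natCast_nonneg n)] at hLL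
  have hs : 0 < s := by positivity
  have ht : 0 < t := by positivity
  have hLn : L ≤ n := (log_le_sub_one_of_pos hn).trans (by linarith)
  have hXs : (#X : ℝ) * s ≤ 2 * n := (le_div_iff₀ hs).mp hX'
  have hDX : 2 * D * (#X : ℝ) ≤ α * n / 2 := by nlinarith
  have hDX' : (2 * D + 1) * (#X : ℝ) ≤ n / (4 * l) := by
    rw [le_div_iff₀ (by positivity)]; nlinarith
  have hk : α * n / 2 ≤ #(C1 \ C2) := by
    linarith [card_sub_card_le_card_sdiff C2 C1]
  have hY : n / (2 * l) ≤ #(W \ (W' ∪ X)) := by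
    have : 3 / 4 * (n / l) ≤ (1 - γ) * n / l := by
      rw [mul_div_assoc]; gcongr; linarith
    have : n / (4 * l) = n / l / 4 := by ring
    have : n / (2 * l) = n / l / 2 := by ring
    linarith [card_sub_card_sub_card_le_card_sdiff_union W' X W]
  have hq : L / n ≤ min p 1 := le_min hp ((div_le_one hn).mpr hLn)
  have hq0 : 0 ≤ min p 1 := (by positivity : 0 ≤ L / n).trans hq
  have hcn' : (c : ℝ) ≤ 2 * n := by exact_mod_cast hcn
  refine (cHyper_blocked_le_exp hc (hq0.trans (min_le_left p 1)) X W W' C1 C2).trans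
    (ENNReal.ofReal_le_ofReal (exp_le_exp.mpr (neg_le_neg ?_)))
  have htl : 64 * t * l ≤ α * L := by
    have htL : t * L ^ (0.1 : ℝ) = L := by rw [← rpow_add (by linarith)]; norm_num
    rw [← htL]; nlinarith
  calc 8 * (n : ℝ) ≤ α * L * n / (8 * t * l) := by
        rw [le_div_iff₀ (by positivity)]; nlinarith
    _ = α * n / 2 * (L / n) / (2 * n) * (n / t * (n / (2 * l))) := by
        field_simp; ring
    _ ≤ #(C1 \ C2) * min p 1 / c * ((#X * #(W \ (W' ∪ X)) : ℕ) : ℝ) := by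
        push_cast; gcongr

/-- The event of `bad_configuration_unlikely` is, by definition,
`{ω | ∃ j X W W' C1 C2, IsBadConfiguration α (γ n) D ω j X W W' C1 C2}`. -/
def IsBadConfiguration (α γ : ℝ) (D : ℕ) {n c : ℕ} (ω : CSample n 2 c) (j : ℕ)
    (X W W' : Finset (Fin n)) (C1 C2 : Finset (Fin c)) : Prop :=
  (n : ℝ) / Real.log n ^ (0.9 : ℝ) ≤ (j : ℝ) ∧
  (j : ℝ) ≤ 2 * n / Real.log n ^ (0.4 : ℝ) ∧
  X.card = j ∧
  (1 - γ) * n / Real.log (Real.log n) ≤ (W.card : ℝ) ∧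
  (W.card : ℝ) ≤ (1 + γ) * n / Real.log (Real.log n) ∧
  W' ⊆ W ∧ W'.card ≤ 2 * D * j ∧
  C1.card = ⌈α * n⌉₊ ∧ C2 ⊆ C1 ∧ C2.card ≤ 2 * D * j ∧
  ∀ x ∈ X, ∀ w ∈ W, ∀ y, col ω x w = some y → y ∈ C2 ∨ w ∈ W' ∨ y ∉ C1

lemma cHyper_exists_badConfiguration_le {n c D : ℕ} {α p γ : ℝ} (hα : 0 < α) (hc : c ≠ 0)
    (hcn : c ≤ 2 * n) (hp : log n / n ≤ p) (hγ : γ ≤ 1 / 4) (hLL : 0 < log (log n))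
    (hcolors : 8 * D ≤ α * log n ^ (0.4 : ℝ))
    (hvertices : 8 * (2 * D + 1) * log (log n) ≤ log n ^ (0.4 : ℝ))
    (hedges : 64 * log (log n) ≤ α * log n ^ (0.1 : ℝ)) :
    cHyper n 2 c (ENNReal.ofReal p)
        {ω | ∃ j X W W' C1 C2, IsBadConfiguration α γ D ω j X W W' C1 C2}
      ≤ ENNReal.ofReal (exp (-n)) := by
  have hcard (m : ℕ) : (Fintype.card (Finset (Fin m)) : ℝ≥0∞) = 2 ^ m := by simp
  calc _ ≤ cHyper n 2 c (ENNReal.ofReal p)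
        {ω | ∃ X W W' C1 C2 j, IsBadConfiguration α γ D ω j X W W' C1 C2} :=
        measure_mono <| by
          rintro _ ⟨j, X, W, W', C1, C2, h⟩
          exact ⟨X, W, W', C1, C2, j, h⟩
    _ ≤ 2 ^ n * (2 ^ n * (2 ^ n * (2 ^ c * (2 ^ c * ENNReal.ofReal (exp (-(8 * n))))))) := by
        rw [← hcard n, ← hcard c]
        refine measure_setOf_exists_le _ fun X => measure_setOf_exists_le _ fun W =>
          measure_setOf_exists_le _ fun W' => measure_setOf_exists_le _ fun C1 =>
          measure_setOf_exists_le _ fun C2 => ?_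
        rcases Set.eq_empty_or_nonempty
            {ω | ∃ j, IsBadConfiguration α γ D ω j X W W' C1 C2} with h | ⟨_, j, hX, hX', rfl,
            hW, -, -, hW', hC1, -, hC2, -⟩
        · simp [h]
        refine (measure_mono ?_).trans
          (cHyper_blocked_le hα hc hcn hp hγ hLL hcolors hvertices hedges hX hX' hW
            (by exact_mod_cast hW') (hC1 ▸ Nat.le_ceil _) (by exact_mod_cast hC2))
        rintro ω ⟨_, -, -, rfl, -, -, -, -, -, -, -, hblocked⟩
        exact hblocked
    _ = 2 ^ (3 * n + 2 * c) * ENNReal.ofReal (exp (-(8 * n))) := by ring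
    _ ≤ 2 ^ (7 * n) * ENNReal.ofReal (exp (-(8 * n))) := by
        gcongr; exacts [one_le_two, by omega]
    _ ≤ ENNReal.ofReal (exp (7 * n)) * ENNReal.ofReal (exp (-(8 * n))) := by
        gcongr; exact_mod_cast ENNReal.two_pow_le_ofReal_exp (7 * n)
    _ = ENNReal.ofReal (exp (-n)) := by
        rw [← ENNReal.ofReal_mul (exp_pos _).le, ← exp_add]; ring_nf

lemma eventually_mul_log_log_le_mul_log_rpow (K : ℝ) {a s : ℝ} (ha : 0 < a) (hs : 0 < s) :
    ∀ᶠ n : ℕ in atTop, K * log (log n) ≤ a * log n ^ s := by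
  have hlog : Tendsto (fun n : ℕ => log n) atTop atTop :=
    tendsto_log_atTop.comp tendsto_natCast_atTop_atTop
  have : ∀ᶠ x : ℝ in atTop, K * log x ≤ a * x ^ s := by
    filter_upwards [((isLittleO_log_rpow_atTop hs).const_mul_left K).bound ha,
      eventually_ge_atTop 0] with x hx hx0
    rw [norm_of_nonneg (rpow_nonneg hx0 s)] at hx
    exact (le_abs_self _).trans hx
  exact hlog.eventually this

theorem bad_configuration_unlikely_general (α ε : ℝ) (hα0 : 0 < α) (hαε : α < ε) (hε1 : ε < 1)
    (D : ℕ)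
    (p : ℕ → ℝ) (hplo : ∀ n : ℕ, Real.log n / n ≤ p n)
    (γ : ℕ → ℝ)
    (hγ : Tendsto γ atTop (nhds 0)) :
    Tendsto (fun n : ℕ => cHyper n 2 ⌈(1 + ε) * n⌉₊ (ENNReal.ofReal (p n))
      {ω | ∃ j : ℕ, ∃ X W W' : Finset (Fin n),
        ∃ C1 C2 : Finset (Fin ⌈(1 + ε) * n⌉₊),
        (n : ℝ) / Real.log n ^ (0.9 : ℝ) ≤ (j : ℝ) ∧
        (j : ℝ) ≤ 2 * n / Real.log n ^ (0.4 : ℝ) ∧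
        X.card = j ∧
        (1 - γ n) * n / Real.log (Real.log n) ≤ (W.card : ℝ) ∧
        (W.card : ℝ) ≤ (1 + γ n) * n / Real.log (Real.log n) ∧
        W' ⊆ W ∧ W'.card ≤ 2 * D * j ∧
        C1.card = ⌈α * n⌉₊ ∧ C2 ⊆ C1 ∧ C2.card ≤ 2 * D * j ∧
        ∀ x ∈ X, ∀ w ∈ W, ∀ y, col ω x w = some y →
          y ∈ C2 ∨ w ∈ W' ∨ y ∉ C1})
      atTop (nhds 0) := by
  have hlog : Tendsto (fun n : ℕ => log n) atTop atTop :=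
    tendsto_log_atTop.comp tendsto_natCast_atTop_atTop
  have hbound : Tendsto (fun n : ℕ => ENNReal.ofReal (exp (-n))) atTop (nhds 0) := by
    simpa using ENNReal.tendsto_ofReal (tendsto_exp_atBot.comp
      (tendsto_neg_atTop_atBot.comp tendsto_natCast_atTop_atTop))
  refine tendsto_of_tendsto_of_tendsto_of_le_of_le' tendsto_const_nhds hbound
    (Eventually.of_forall fun _ => zero_le) ?_
  filter_upwards [eventually_gt_atTop 0, (tendsto_log_atTop.comp hlog).eventually_gt_atTop 0,
    hγ.eventually_le_const (by norm_num : (0 : ℝ) < 1 / 4),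
    ((tendsto_rpow_atTop (by norm_num : (0 : ℝ) < 0.4)).comp hlog).eventually_ge_atTop (8 * D / α),
    eventually_mul_log_log_le_mul_log_rpow (8 * (2 * D + 1)) one_pos (by norm_num : (0 : ℝ) < 0.4),
    eventually_mul_log_log_le_mul_log_rpow 64 hα0 (by norm_num : (0 : ℝ) < 0.1)]
    with n hn hLL hγn hcolors hvertices hedges
  have hn' : (0 : ℝ) < n := by exact_mod_cast hn
  have hc : ⌈(1 + ε) * n⌉₊ ≠ 0 := (Nat.ceil_pos.mpr (mul_pos (by linarith) hn')).ne'
  have hcn : ⌈(1 + ε) * n⌉₊ ≤ 2 * n := Nat.ceil_le.mpr (by push_cast; nlinarith)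
  exact cHyper_exists_badConfiguration_le hα0 hc hcn (hplo n) hγn hLL
    ((div_le_iff₀' hα0).mp hcolors) (by simpa using hvertices) hedges

/-- For constants `0 < α < ε < 1`, a fixed `D ≥ 1`, `c = ⌈(1+ε)n⌉`
colors, `log n/n ≤ p ≤ 2 log n/n` and `γ(n) → 0`, the probability that `G ~ G_c(n,p)`
admits `n/log^{0.9} n ≤ j ≤ 2n/log^{0.4} n`, a set `X` of size `j`, a set `W` of size
`(1±γ(n))·n/log log n`, `W' ⊆ W` and `C2 ⊆ C1 ⊆ [c]` with `|C1| = ⌈αn⌉`,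
`|W'|, |C2| ≤ 2Dj`, such that every `G`-edge between `X` and `W` has its color in
`C2`, or its endpoint in `W'`, or its color outside `C1`, tends to `0`. -/
theorem bad_configuration_unlikely (α ε : ℝ) (hα0 : 0 < α) (hαε : α < ε) (hε1 : ε < 1)
    (D : ℕ) (hD : 0 < D)
    (p : ℕ → ℝ) (hplo : ∀ n : ℕ, Real.log n / n ≤ p n)
    (hphi : ∀ n : ℕ, p n ≤ 2 * Real.log n / n)
    (γ : ℕ → ℝ) (hγ0 : ∀ n, 0 < γ n) (hγ1 : ∀ n, γ n < 1)
    (hγ : Tendsto γ atTop (nhds 0)) :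
    Tendsto (fun n : ℕ => cHyper n 2 ⌈(1 + ε) * n⌉₊ (ENNReal.ofReal (p n))
      {ω | ∃ j : ℕ, ∃ X W W' : Finset (Fin n),
        ∃ C1 C2 : Finset (Fin ⌈(1 + ε) * n⌉₊),
        (n : ℝ) / Real.log n ^ (0.9 : ℝ) ≤ (j : ℝ) ∧
        (j : ℝ) ≤ 2 * n / Real.log n ^ (0.4 : ℝ) ∧
        X.card = j ∧
        (1 - γ n) * n / Real.log (Real.log n) ≤ (W.card : ℝ) ∧
        (W.card : ℝ) ≤ (1 + γ n) * n / Real.log (Real.log n) ∧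
        W' ⊆ W ∧ W'.card ≤ 2 * D * j ∧
        C1.card = ⌈α * n⌉₊ ∧ C2 ⊆ C1 ∧ C2.card ≤ 2 * D * j ∧
        ∀ x ∈ X, ∀ w ∈ W, ∀ y, col ω x w = some y →
          y ∈ C2 ∨ w ∈ W' ∨ y ∉ C1})
      atTop (nhds 0) :=
  bad_configuration_unlikely_general α ε hα0 hαε hε1 D p hplo γ hγ
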